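/- arXiv:2105.14586 — 2 statements merged into one kernel-verified Lean document; each statement's English description precedes it below -/
import Mathlib

section
/- Let F_l and F_{l+1} be the CDFs of N(μ_l, σ²) and N(μ_{l+1}, σ²) with σ > 0 and μ_{l+1} > μ_l. Then sup over x of |F_l(x) − F_{l+1}(x)| equals erf((μ_{l+1} − μ_l)/(2√2 σ)). -/
/-- The Gauss error function. -/
noncomputable def erf (z : ℝ) : ℝ := (2 / Real.sqrt Real.pi) * ∫ t in (0:ℝ)..z, Real.exp (-t^2)

/-- The CDF of a Gaussian distribution with mean `μ` and standard deviation `σ`. -/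
noncomputable def gaussCDF (μ σ x : ℝ) : ℝ := (1/2) * (1 + erf ((x - μ) / (σ * Real.sqrt 2)))

lemma contIntegrable (f : ℝ → ℝ) (hf : Continuous f) (a b : ℝ) :
    IntervalIntegrable f MeasureTheory.volume a b :=
  hf.intervalIntegrable a b

lemma expInt1 (a b : ℝ) :
    IntervalIntegrable (fun t => Real.exp (-t^2)) MeasureTheory.volume a b :=
  contIntegrable _ (by continuity) a b

lemma expInt2 (d a b : ℝ) :
    IntervalIntegrable (fun t => Real.exp (-(t - 2*d)^2)) MeasureTheory.volume a b :=
  contIntegrable _ (by continuity) a b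

lemma erf_sub_eq (u v : ℝ) :
    erf u - erf v = (2 / Real.sqrt Real.pi) * ∫ t in v..u, Real.exp (-t^2) := by
  unfold erf
  rw [← mul_sub,
    intervalIntegral.integral_interval_sub_left (expInt1 0 u) (expInt1 0 v)]

lemma erf_neg (x : ℝ) : erf (-x) = - erf x := by
  have h : (∫ t in (0:ℝ)..x, Real.exp (-t^2)) = ∫ t in (-x)..(0:ℝ), Real.exp (-t^2) := by
    have := intervalIntegral.integral_comp_neg (a := 0) (b := x)
      (fun t : ℝ => Real.exp (-t^2))
    simp only [neg_zero] at this
    rw [← this]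
    congr 1
    ext t
    ring_nf
  unfold erf
  rw [intervalIntegral.integral_symm, ← h, mul_neg]

lemma cmp_int (d u : ℝ) (hd : 0 ≤ d) :
    (∫ t in d..u, Real.exp (-t^2)) ≤ ∫ t in d..u, Real.exp (-(t - 2*d)^2) := by
  rcases le_or_gt d u with h | h
  · apply intervalIntegral.integral_mono_on h (expInt1 d u) (expInt2 d d u)
    intro t ht
    apply Real.exp_le_exp.mpr
    nlinarith [mul_nonneg hd (sub_nonneg.mpr ht.1)]
  · have e1 : (∫ t in d..u, Real.exp (-t^2)) = -∫ t in u..d, Real.exp (-t^2) :=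
      intervalIntegral.integral_symm u d
    have e2 : (∫ t in d..u, Real.exp (-(t - 2*d)^2)) = -∫ t in u..d, Real.exp (-(t - 2*d)^2) :=
      intervalIntegral.integral_symm u d
    have hle : (∫ t in u..d, Real.exp (-(t - 2*d)^2)) ≤ ∫ t in u..d, Real.exp (-t^2) := by
      apply intervalIntegral.integral_mono_on h.le (expInt2 d u d) (expInt1 u d)
      intro t ht
      apply Real.exp_le_exp.mpr
      nlinarith [mul_nonneg hd (sub_nonneg.mpr ht.2)]
    rw [e1, e2]
    linarith

lemma key_int (d u : ℝ) (hd : 0 ≤ d) :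
    (∫ t in (u - 2*d)..u, Real.exp (-t^2)) ≤ ∫ t in (-d)..d, Real.exp (-t^2) := by
  have h1 : (∫ t in (u - 2*d)..u, Real.exp (-t^2)) =
      (∫ t in (u - 2*d)..d, Real.exp (-t^2)) + ∫ t in d..u, Real.exp (-t^2) :=
    (intervalIntegral.integral_add_adjacent_intervals
      (expInt1 _ _) (expInt1 _ _)).symm
  have h2 : (∫ t in (-d)..d, Real.exp (-t^2)) =
      (∫ t in (-d)..(u - 2*d), Real.exp (-t^2)) + ∫ t in (u - 2*d)..d, Real.exp (-t^2) :=
    (intervalIntegral.integral_add_adjacent_intervals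
      (expInt1 _ _) (expInt1 _ _)).symm
  have h3 : (∫ t in (-d)..(u - 2*d), Real.exp (-t^2)) =
      ∫ t in d..u, Real.exp (-(t - 2*d)^2) := by
    rw [intervalIntegral.integral_comp_sub_right (fun t : ℝ => Real.exp (-t^2)) (2*d),
      show d - 2*d = -d by ring]
  rw [h1, h2, h3]
  have := cmp_int d u hd
  linarith

/-- The Kolmogorov distance between two Gaussian CDFs with common variance `σ²` and means
`μl < μl1` equals `erf((μl1 - μl)/(2√2 σ))`. -/
theorem stmt1 (μl μl1 σ : ℝ) (hσ : 0 < σ) (hμ : μl < μl1) :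
    ⨆ x : ℝ, |gaussCDF μl σ x - gaussCDF μl1 σ x| =
      erf ((μl1 - μl) / (2 * Real.sqrt 2 * σ)) := by
  have h2 : (0:ℝ) < Real.sqrt 2 := Real.sqrt_pos.mpr two_pos
  have hπ : (0:ℝ) < Real.sqrt Real.pi := Real.sqrt_pos.mpr Real.pi_pos
  set c : ℝ := σ * Real.sqrt 2 with hc
  have hcpos : 0 < c := mul_pos hσ h2
  set d : ℝ := (μl1 - μl) / (2 * c) with hd
  have hdpos : 0 < d := div_pos (by linarith) (by linarith)
  have hval : (μl1 - μl) / (2 * Real.sqrt 2 * σ) = d := by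
    rw [hd, hc]; ring_nf
  -- formula for |f x|
  have hfx : ∀ x : ℝ, |gaussCDF μl σ x - gaussCDF μl1 σ x| =
      (1 / Real.sqrt Real.pi) * ∫ t in ((x - μl)/c - 2*d)..((x - μl)/c), Real.exp (-t^2) := by
    intro x
    have hv : (x - μl1)/c = (x - μl)/c - 2*d := by
      rw [hd]; field_simp; ring
    have heq : gaussCDF μl σ x - gaussCDF μl1 σ x =
        (1/2) * (erf ((x - μl)/c) - erf ((x - μl)/c - 2*d)) := by
      unfold gaussCDF
      rw [← hc, ← hv]; ring
    rw [heq, erf_sub_eq]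
    have hnn : (0:ℝ) ≤ ∫ t in ((x - μl)/c - 2*d)..((x - μl)/c), Real.exp (-t^2) :=
      intervalIntegral.integral_nonneg (by linarith) (fun t _ => (Real.exp_pos _).le)
    rw [abs_of_nonneg (by positivity)]
    field_simp
  -- value of the central integral
  have hcenter : (1 / Real.sqrt Real.pi) * (∫ t in (-d)..d, Real.exp (-t^2)) = erf d := by
    have := erf_sub_eq d (-d)
    rw [erf_neg] at this
    have h2π : (2 / Real.sqrt Real.pi) ≠ 0 := by positivity
    field_simp at this ⊢
    linarith
  -- upper bound
  have hub : ∀ x : ℝ, |gaussCDF μl σ x - gaussCDF μl1 σ x| ≤ erf d := by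
    intro x
    rw [hfx x, ← hcenter]
    have := key_int d ((x - μl)/c) hdpos.le
    have hco : (0:ℝ) ≤ 1 / Real.sqrt Real.pi := by positivity
    exact mul_le_mul_of_nonneg_left this hco
  -- attained at midpoint
  have hx0 : |gaussCDF μl σ ((μl + μl1)/2) - gaussCDF μl1 σ ((μl + μl1)/2)| = erf d := by
    rw [hfx]
    have hu : ((μl + μl1)/2 - μl)/c = d := by
      rw [hd]; field_simp; ring
    rw [hu, show d - 2*d = -d by ring, hcenter]
  rw [hval]
  apply le_antisymm
  · exact ciSup_le hub
  · have hbdd : BddAbove (Set.range fun x => |gaussCDF μl σ x - gaussCDF μl1 σ x|) := by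
      refine ⟨erf d, ?_⟩
      rintro y ⟨x, rfl⟩
      exact hub x
    exact hx0 ▸ le_ciSup hbdd ((μl + μl1)/2)
end

section
/- Fix σ > 0, 0 ≤ Δ_min < Δ_max, P_M ∈ (0,1), and P_F ∈ (0,2). If n ≥ ln(2/P_F) / (2 · erf²((P_M(Δ_max − Δ_min) + Δ_min)/(2√2 σ))), then with t_ref = √((1/(2n)) ln(2/P_F)) we have (2√2 σ erf⁻¹(t_ref) − Δ_min)/(Δ_max − Δ_min) ≤ P_M. -/
/-- The inverse of the Gauss error function. -/
noncomputable def erfInv : ℝ → ℝ := Function.invFun erf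

lemma expsq_cont : Continuous fun t : ℝ => Real.exp (-t^2) := by continuity

lemma expsq_intable (a b : ℝ) : IntervalIntegrable (fun t : ℝ => Real.exp (-t^2)) MeasureTheory.volume a b :=
  expsq_cont.intervalIntegrable a b

lemma erf_continuous : Continuous erf := by
  unfold erf
  exact continuous_const.mul (intervalIntegral.continuous_primitive (fun a b => expsq_intable a b) 0)

lemma erf_strictMono : StrictMono erf := by
  intro a b hab
  unfold erf
  have key : (∫ t in (0:ℝ)..b, Real.exp (-t^2)) - (∫ t in (0:ℝ)..a, Real.exp (-t^2))
      = ∫ t in a..b, Real.exp (-t^2) := by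
    rw [← intervalIntegral.integral_add_adjacent_intervals (expsq_intable 0 a) (expsq_intable a b)]
    ring
  have hpos : 0 < ∫ t in a..b, Real.exp (-t^2) :=
    intervalIntegral.intervalIntegral_pos_of_pos (expsq_intable a b) (fun x => Real.exp_pos _) hab
  have hc : 0 < 2 / Real.sqrt Real.pi := by positivity
  nlinarith [key, hpos, hc]

lemma erf_zero : erf 0 = 0 := by simp [erf]

/-- If the number of post-change samples `n` satisfies the lower bound of Lemma 4, then with
`t_ref = √((1/(2n)) ln(2/P_F))`, the missed-detection probability is at most `P_M`. -/
theorem stmt8 (σ Δmin Δmax P_M P_F n : ℝ) (hσ : 0 < σ) (hmin : 0 ≤ Δmin) (hlt : Δmin < Δmax)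
    (hPM : P_M ∈ Set.Ioo (0:ℝ) 1) (hPF : P_F ∈ Set.Ioo (0:ℝ) 2)
    (hn : n ≥ Real.log (2 / P_F) /
      (2 * (erf ((P_M * (Δmax - Δmin) + Δmin) / (2 * Real.sqrt 2 * σ)))^2)) :
    (2 * Real.sqrt 2 * σ * erfInv (Real.sqrt ((1 / (2 * n)) * Real.log (2 / P_F))) - Δmin)
      / (Δmax - Δmin) ≤ P_M := by
  obtain ⟨hPM0, hPM1⟩ := hPM
  obtain ⟨hPF0, hPF2⟩ := hPF
  have hs2 : (0:ℝ) < Real.sqrt 2 := by positivity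
  set A := (P_M * (Δmax - Δmin) + Δmin) / (2 * Real.sqrt 2 * σ) with hAdef
  have hA : 0 < A := by
    apply div_pos; nlinarith; positivity
  have herfA : 0 < erf A := by
    have := erf_strictMono hA
    rwa [erf_zero] at this
  have hL : 0 < Real.log (2 / P_F) := by
    apply Real.log_pos
    rw [lt_div_iff₀ hPF0]; linarith
  have hnpos : 0 < n := by
    have : 0 < Real.log (2 / P_F) / (2 * (erf A)^2) := by positivity
    linarith
  set t := Real.sqrt ((1 / (2 * n)) * Real.log (2 / P_F)) with htdef
  have ht0 : 0 ≤ t := Real.sqrt_nonneg _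
  have htsq : t^2 = (1 / (2 * n)) * Real.log (2 / P_F) := by
    rw [htdef, Real.sq_sqrt]; positivity
  have htle : t ≤ erf A := by
    have h1 : Real.log (2 / P_F) ≤ n * (2 * (erf A)^2) := by
      rw [ge_iff_le, div_le_iff₀ (by positivity)] at hn
      linarith
    have h2 : t^2 ≤ (erf A)^2 := by
      rw [htsq]
      rw [div_mul_eq_mul_div, one_mul, div_le_iff₀ (by positivity)]
      nlinarith
    nlinarith
  -- t is in the range of erf on [0, A]
  have hmem : t ∈ Set.Icc (erf 0) (erf A) := by
    constructor
    · rw [erf_zero]; exact ht0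
    · exact htle
  obtain ⟨x, hx, hxt⟩ := intermediate_value_Icc hA.le erf_continuous.continuousOn hmem
  have hinv : erfInv t = x := by
    rw [← hxt]
    exact Function.leftInverse_invFun erf_strictMono.injective x
  rw [hinv]
  rw [div_le_iff₀ (by linarith)]
  have hxA : x ≤ A := hx.2
  have : 2 * Real.sqrt 2 * σ * x ≤ 2 * Real.sqrt 2 * σ * A := by
    apply mul_le_mul_of_nonneg_left hxA (by positivity)
  have hAval : 2 * Real.sqrt 2 * σ * A = P_M * (Δmax - Δmin) + Δmin := by
    rw [hAdef]; field_simp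
  linarith
end
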